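/- arXiv:1609.07410 — 9 statements merged into one kernel-verified Lean document; each statement's English description precedes it below -/
import Mathlib

section
/- For real numbers f_1, …, f_K and any index k ∈ {1, …, K}, the softmax probability satisfies the one-vs-each lower bound: e^{f_k} / (∑_{m=1}^K e^{f_m}) ≥ ∏_{m ≠ k} σ(f_k - f_m), where σ(t) = 1/(1 + e^{-t}) is the logistic sigmoid; equivalently, Softmax_k(f) ≥ ∏_{m ≠ k} e^{f_k}/(e^{f_k} + e^{f_m}). -/
lemma one_add_sum_le_prod_one_add {ι : Type*} (s : Finset ι) (a : ι → ℝ)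
    (ha : ∀ i ∈ s, 0 ≤ a i) : 1 + ∑ i ∈ s, a i ≤ ∏ i ∈ s, (1 + a i) := by
  classical
  induction s using Finset.induction_on with
  | empty => simp
  | @insert x s' hx ih =>
    rw [Finset.sum_insert hx, Finset.prod_insert hx]
    have h1 : 1 + ∑ i ∈ s', a i ≤ ∏ i ∈ s', (1 + a i) :=
      ih (fun i hi => ha i (Finset.mem_insert_of_mem hi))
    have hax : 0 ≤ a x := ha x (Finset.mem_insert_self x s')
    have hs : 0 ≤ ∑ i ∈ s', a i :=
      Finset.sum_nonneg fun i hi => ha i (Finset.mem_insert_of_mem hi)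
    nlinarith

/-- One-vs-each lower bound on the softmax probability:
`Softmax_k(f) ≥ ∏_{m ≠ k} σ(f k - f m)` where `σ(t) = 1/(1 + e^{-t})`. -/
theorem softmax_ge_one_vs_each {K : ℕ} (f : Fin K → ℝ) (k : Fin K) :
    Real.exp (f k) / (∑ m, Real.exp (f m)) ≥
      ∏ m ∈ Finset.univ.erase k, 1 / (1 + Real.exp (-(f k - f m))) := by
  classical
  set a : Fin K → ℝ := fun m => Real.exp (f m - f k) with ha
  have hapos : ∀ m, 0 < a m := fun m => Real.exp_pos _
  have hsum : ∑ m, Real.exp (f m)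
      = Real.exp (f k) * (1 + ∑ m ∈ Finset.univ.erase k, a m) := by
    rw [← Finset.add_sum_erase _ _ (Finset.mem_univ k), mul_add, mul_one,
      Finset.mul_sum]
    congr 1
    refine Finset.sum_congr rfl fun m _ => ?_
    rw [ha, ← Real.exp_add]
    ring_nf
  have hS : 0 ≤ ∑ m ∈ Finset.univ.erase k, a m :=
    Finset.sum_nonneg fun m _ => (hapos m).le
  have hrhs : ∀ m, 1 / (1 + Real.exp (-(f k - f m))) = 1 / (1 + a m) := by
    intro m; rw [ha]; ring_nf
  rw [hsum]
  simp only [hrhs]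
  rw [Finset.prod_div_distrib, Finset.prod_const_one]
  have hprodpos : 0 < ∏ m ∈ Finset.univ.erase k, (1 + a m) :=
    Finset.prod_pos fun m _ => by positivity
  have hkey : 1 + ∑ m ∈ Finset.univ.erase k, a m ≤ ∏ m ∈ Finset.univ.erase k, (1 + a m) :=
    one_add_sum_le_prod_one_add _ _ fun m _ => (hapos m).le
  have h1 : 1 / ∏ m ∈ Finset.univ.erase k, (1 + a m)
      ≤ 1 / (1 + ∑ m ∈ Finset.univ.erase k, a m) :=
    one_div_le_one_div_of_le (by linarith) hkey
  have h2 : Real.exp (f k) / (Real.exp (f k) * (1 + ∑ m ∈ Finset.univ.erase k, a m))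
      = 1 / (1 + ∑ m ∈ Finset.univ.erase k, a m) := by
    rw [mul_comm, ← div_div, div_right_comm, div_self (Real.exp_ne_zero _)]
  rw [h2]
  exact h1
end

section
/- Let (Ω, P) be a probability space, let A be an event, and let {B_i}_{i ∈ I} be a countable family of pairwise disjoint events with ∪_{i ∈ I} B_i = Ω \ A and P(A ∪ B_i) > 0 for all i. Then P(A) ≥ ∏_{i ∈ I} P(A | A ∪ B_i). -/
open MeasureTheory ProbabilityTheory

open scoped ENNReal in
private lemma aux_prod_le {ι : Type*} (a : ℝ≥0∞) (ha0 : a ≠ 0) (ha : a ≠ ∞)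
    (b : ι → ℝ≥0∞) (s : Finset ι) :
    ∏ i ∈ s, a * (a + b i)⁻¹ ≤ a * (a + ∑ i ∈ s, b i)⁻¹ := by
  classical
  induction s using Finset.induction with
  | empty => simp [ENNReal.mul_inv_cancel ha0 ha]
  | @insert j s hj ih =>
    rw [Finset.prod_insert hj, Finset.sum_insert hj]
    set S := ∑ i ∈ s, b i with hS
    calc (a * (a + b j)⁻¹) * ∏ i ∈ s, a * (a + b i)⁻¹
        ≤ (a * (a + b j)⁻¹) * (a * (a + S)⁻¹) := mul_le_mul_right ih _
      _ = a * a * ((a + b j) * (a + S))⁻¹ := by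
          rw [ENNReal.mul_inv (by left; simp [ha0]) (by right; simp [ha0])]
          ring
      _ ≤ a * a * (a * (a + (b j + S)))⁻¹ := by
          refine mul_le_mul_right ?_ _
          rw [ENNReal.inv_le_inv]
          calc a * (a + (b j + S)) ≤ a * (a + (b j + S)) + b j * S := le_self_add
            _ = (a + b j) * (a + S) := by ring
      _ = a * (a + (b j + S))⁻¹ := by
          rw [ENNReal.mul_inv (by left; exact ha0) (by left; exact ha)]
          rw [← mul_assoc, mul_assoc a a _, ENNReal.mul_inv_cancel ha0 ha, mul_one]

/-- For an event `A` and a countable family of pairwise disjoint events `B i` whose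
union is `Ω \ A`, with `P (A ∪ B i) > 0` for all `i`,
`P A ≥ ∏_i P(A | A ∪ B i)`, the countable product being interpreted as the
infimum of finite partial products. -/
theorem prob_ge_iInf_prod_cond {Ω : Type*} [MeasurableSpace Ω]
    (P : Measure Ω) [IsProbabilityMeasure P]
    {ι : Type*} [Countable ι] (A : Set Ω) (B : ι → Set Ω)
    (hA : MeasurableSet A) (hB : ∀ i, MeasurableSet (B i))
    (hdisj : Pairwise (Function.onFun Disjoint B))
    (hunion : (⋃ i, B i) = Aᶜ)
    (hpos : ∀ i, 0 < P (A ∪ B i)) :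
    P A ≥ ⨅ s : Finset ι, ∏ i ∈ s, P[|A ∪ B i] A := by
  have hBsub : ∀ i, B i ⊆ Aᶜ := fun i => hunion ▸ Set.subset_iUnion B i
  have hdisjA : ∀ i, Disjoint A (B i) :=
    fun i => (Set.disjoint_compl_right_iff_subset.mpr subset_rfl).mono_right (hBsub i)
  have hunionmeas : ∀ i, P (A ∪ B i) = P A + P (B i) :=
    fun i => measure_union (hdisjA i) (hB i)
  have hcond : ∀ i, P[|A ∪ B i] A = P A * (P A + P (B i))⁻¹ := by
    intro i
    rw [cond_apply (hA.union (hB i)), Set.union_inter_cancel_left, hunionmeas i, mul_comm]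
  have hsum : ∑' i, P (B i) = P Aᶜ := by
    rw [← measure_iUnion hdisj hB, hunion]
  by_cases ha0 : P A = 0
  · -- then Aᶜ has measure 1 > 0, so ι is nonempty; single factor is 0
    have hne : Nonempty ι := by
      by_contra h
      rw [not_nonempty_iff] at h
      have h1 : P Aᶜ = 0 := by rw [← hsum]; simp
      have h2 := measure_add_measure_compl (μ := P) hA
      rw [ha0, h1, zero_add] at h2
      simp at h2
    obtain ⟨i⟩ := hne
    refine le_trans (iInf_le _ {i}) ?_
    rw [Finset.prod_singleton, hcond i, ha0, zero_mul]
  · have ha := measure_ne_top P A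
    simp_rw [hcond]
    calc ⨅ s : Finset ι, ∏ i ∈ s, P A * (P A + P (B i))⁻¹
        ≤ ⨅ s : Finset ι, P A * (P A + ∑ i ∈ s, P (B i))⁻¹ :=
          iInf_mono fun s => aux_prod_le (P A) ha0 ha _ s
      _ = P A * ⨅ s : Finset ι, (P A + ∑ i ∈ s, P (B i))⁻¹ :=
          (ENNReal.mul_iInf_of_ne ha0 ha).symm
      _ = P A * (⨆ s : Finset ι, (P A + ∑ i ∈ s, P (B i)))⁻¹ := by
          rw [ENNReal.inv_iSup]
      _ = P A * (P A + ⨆ s : Finset ι, ∑ i ∈ s, P (B i))⁻¹ := by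
          rw [ENNReal.add_iSup]
      _ = P A * (P A + ∑' i, P (B i))⁻¹ := by rw [← ENNReal.tsum_eq_iSup_sum]
      _ = P A := by
          rw [hsum, measure_add_measure_compl hA, measure_univ, inv_one, mul_one]
end

section
/- Let (Ω, P) be a probability space, A an event, and B_i, B_j disjoint events, both disjoint from A, with P(A ∪ B_i) > 0 and P(A ∪ B_j) > 0 and P(A ∪ B_i ∪ B_j) > 0. Then P(A | A ∪ B_i) · P(A | A ∪ B_j) ≤ P(A | A ∪ B_i ∪ B_j); that is, merging two events in the one-vs-each product can only tighten the bound. -/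
open MeasureTheory ProbabilityTheory

/-- Merging two events in the one-vs-each product can only tighten the bound:
`P(A | A ∪ B i) * P(A | A ∪ B j) ≤ P(A | A ∪ B i ∪ B j)`. -/
theorem cond_mul_cond_le_cond_union {Ω : Type*} [MeasurableSpace Ω]
    (P : Measure Ω) [IsProbabilityMeasure P]
    (A Bi Bj : Set Ω) (hA : MeasurableSet A) (hBi : MeasurableSet Bi)
    (hBj : MeasurableSet Bj)
    (hij : Disjoint Bi Bj) (hAi : Disjoint A Bi) (hAj : Disjoint A Bj)
    (hposi : 0 < P (A ∪ Bi)) (hposj : 0 < P (A ∪ Bj))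
    (hposij : 0 < P (A ∪ Bi ∪ Bj)) :
    P[|A ∪ Bi] A * P[|A ∪ Bj] A ≤ P[|A ∪ Bi ∪ Bj] A := by
  have hI1 : (A ∪ Bi) ∩ A = A := Set.union_inter_cancel_left
  have hI2 : (A ∪ Bj) ∩ A = A := Set.union_inter_cancel_left
  have hI3 : (A ∪ Bi ∪ Bj) ∩ A = A := by
    rw [Set.inter_eq_right]; exact Set.subset_union_left.trans Set.subset_union_left
  rw [cond_apply (hA.union hBi), cond_apply (hA.union hBj),
      cond_apply ((hA.union hBi).union hBj), hI1, hI2, hI3,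
      measure_union hAi hBi, measure_union hAj hBj,
      measure_union (hAj.union_left hij) hBj, measure_union hAi hBi]
  set a := P A with ha
  set b := P Bi
  set c := P Bj
  have haT : a ≠ ⊤ := measure_ne_top P A
  rcases eq_or_ne a 0 with h0 | h0
  · simp [h0]
  · rw [← ENNReal.div_eq_inv_mul, ← ENNReal.div_eq_inv_mul, ← ENNReal.div_eq_inv_mul,
        ← ENNReal.mul_div_mul_left a (a + b + c) h0 haT]
    have habT : a + b ≠ ⊤ := ENNReal.add_ne_top.2 ⟨haT, measure_ne_top P Bi⟩
    have hacT : a + c ≠ ⊤ := ENNReal.add_ne_top.2 ⟨haT, measure_ne_top P Bj⟩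
    have hle : a * (a + b + c) ≤ (a + b) * (a + c) := by
      have h : (a + b) * (a + c) = a * (a + b + c) + b * c := by ring
      rw [h]; exact le_self_add
    calc a / (a + b) * (a / (a + c)) = a * a * ((a + b)⁻¹ * (a + c)⁻¹) := by
          simp only [div_eq_mul_inv]; ring
      _ = a * a / ((a + b) * (a + c)) := by
          rw [← ENNReal.mul_inv (Or.inr hacT) (Or.inl habT), div_eq_mul_inv]
      _ ≤ a * a / (a * (a + b + c)) := ENNReal.div_le_div_left hle _
end

section
/- Let f_1, …, f_K be real numbers, let k ∈ {1, …, K}, and let C_k and C̄_k be disjoint sets of indices with {k} ∪ C_k ∪ C̄_k = {1, …, K} and k ∉ C_k, k ∉ C̄_k. Then e^{f_k}/∑_{m=1}^K e^{f_m} ≥ [e^{f_k}/(e^{f_k} + ∑_{m ∈ C_k} e^{f_m})] · [e^{f_k}/(e^{f_k} + ∑_{m ∈ C̄_k} e^{f_m})] ≥ [e^{f_k}/(e^{f_k} + ∑_{m ∈ C_k} e^{f_m})] · ∏_{m ∈ C̄_k} σ(f_k - f_m). -/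
lemma prod_div_le_div_sum {ι : Type*} (a : ℝ) (ha : 0 < a) (g : ι → ℝ)
    (hg : ∀ m, 0 ≤ g m) (s : Finset ι) :
    ∏ m ∈ s, a / (a + g m) ≤ a / (a + ∑ m ∈ s, g m) := by
  induction s using Finset.cons_induction with
  | empty => simp [div_self ha.ne']
  | cons x s hx ih =>
    rw [Finset.prod_cons, Finset.sum_cons]
    have hgx := hg x
    have hs : 0 ≤ ∑ m ∈ s, g m := Finset.sum_nonneg fun m _ => hg m
    calc a / (a + g x) * ∏ m ∈ s, a / (a + g m)
        ≤ a / (a + g x) * (a / (a + ∑ m ∈ s, g m)) := by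
          exact mul_le_mul_of_nonneg_left ih (by positivity)
      _ ≤ a / (a + (g x + ∑ m ∈ s, g m)) := by
          rw [div_mul_div_comm, div_le_div_iff₀ (by positivity) (by positivity)]
          nlinarith [mul_nonneg (mul_nonneg ha.le hgx) hs]

/-- Intermediate hierarchical bound between the exact softmax and the
one-vs-each bound: for disjoint index sets `C`, `C̄` with
`{k} ∪ C ∪ C̄ = {1,…,K}` and `k ∉ C`, `k ∉ C̄`,
`Softmax_k(f) ≥ Softmax_k(f_k, f_C) · Softmax_k(f_k, f_C̄)
            ≥ Softmax_k(f_k, f_C) · ∏_{m ∈ C̄} σ(f k - f m)`. -/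
theorem softmax_hierarchical_bound {K : ℕ} (f : Fin K → ℝ) (k : Fin K)
    (C Cbar : Finset (Fin K)) (hdisj : Disjoint C Cbar)
    (hcover : {k} ∪ C ∪ Cbar = (Finset.univ : Finset (Fin K)))
    (hkC : k ∉ C) (hkCbar : k ∉ Cbar) :
    Real.exp (f k) / (∑ m, Real.exp (f m)) ≥
      (Real.exp (f k) / (Real.exp (f k) + ∑ m ∈ C, Real.exp (f m))) *
        (Real.exp (f k) / (Real.exp (f k) + ∑ m ∈ Cbar, Real.exp (f m))) ∧
    (Real.exp (f k) / (Real.exp (f k) + ∑ m ∈ C, Real.exp (f m))) *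
        (Real.exp (f k) / (Real.exp (f k) + ∑ m ∈ Cbar, Real.exp (f m))) ≥
      (Real.exp (f k) / (Real.exp (f k) + ∑ m ∈ C, Real.exp (f m))) *
        ∏ m ∈ Cbar, 1 / (1 + Real.exp (-(f k - f m))) := by
  have hapos : (0:ℝ) < Real.exp (f k) := Real.exp_pos _
  set a := Real.exp (f k) with ha
  have hS : 0 ≤ ∑ m ∈ C, Real.exp (f m) :=
    Finset.sum_nonneg fun _ _ => (Real.exp_pos _).le
  have hT : 0 ≤ ∑ m ∈ Cbar, Real.exp (f m) :=
    Finset.sum_nonneg fun _ _ => (Real.exp_pos _).le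
  have hd1 : Disjoint ({k} : Finset (Fin K)) C := by
    simpa [Finset.disjoint_singleton_left] using hkC
  have hd2 : Disjoint ({k} ∪ C : Finset (Fin K)) Cbar := by
    rw [Finset.disjoint_union_left]
    exact ⟨by simpa [Finset.disjoint_singleton_left] using hkCbar, hdisj⟩
  have hsum : ∑ m, Real.exp (f m)
      = a + ∑ m ∈ C, Real.exp (f m) + ∑ m ∈ Cbar, Real.exp (f m) := by
    rw [← hcover, Finset.sum_union hd2, Finset.sum_union hd1, Finset.sum_singleton]
  constructor
  · rw [hsum, ge_iff_le, div_mul_div_comm, div_le_div_iff₀ (by positivity) (by positivity)]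
    nlinarith [mul_nonneg hS hT]
  · apply mul_le_mul_of_nonneg_left _ (by positivity)
    have hrw : ∀ m ∈ Cbar, 1 / (1 + Real.exp (-(f k - f m))) = a / (a + Real.exp (f m)) := by
      intro m _
      rw [ha, Real.exp_neg, Real.exp_sub]
      have h1 : Real.exp (f m) ≠ 0 := (Real.exp_pos _).ne'
      have h2 : Real.exp (f k) ≠ 0 := (Real.exp_pos _).ne'
      have h3 : Real.exp (f k) + Real.exp (f m) ≠ 0 := by positivity
      field_simp
    rw [Finset.prod_congr rfl hrw]
    exact prod_div_le_div_sum a hapos _ (fun m => (Real.exp_pos _).le) Cbar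
end

section
/- Let N_1, …, N_K be positive real counts. Define the one-vs-each lower bound on the log-likelihood 𝓕(f) = ∑_{k=1}^K N_k ∑_{m ≠ k} log(e^{f_k}/(e^{f_k} + e^{f_m})) for f ∈ ℝ^K. Then for any constant c ∈ ℝ, the vector with components f_k = log N_k + c globally maximizes 𝓕 over ℝ^K. -/
open Finset

/-- The one-vs-each lower bound on the categorical log-likelihood,
`𝓕 f = ∑ k, N k * ∑_{m ≠ k} log (e^{f k} / (e^{f k} + e^{f m}))`,
is globally maximized by `f k = log (N k) + c` for any constant `c`. -/
theorem one_vs_each_mle_optimal {K : ℕ} (N : Fin K → ℝ) (hN : ∀ k, 0 < N k)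
    (F : (Fin K → ℝ) → ℝ)
    (hF : ∀ f, F f = ∑ k, N k * ∑ m ∈ Finset.univ.erase k,
      Real.log (Real.exp (f k) / (Real.exp (f k) + Real.exp (f m)))) :
    ∀ c : ℝ, ∀ g : Fin K → ℝ, F g ≤ F (fun k => Real.log (N k) + c) := by
  intro c g
  rw [hF, hF]
  have hapos : ∀ k, 0 < Real.exp (g k) := fun k => Real.exp_pos _
  -- the optimal log term simplifies
  have hopt : ∀ k m : Fin K,
      Real.log (Real.exp (Real.log (N k) + c) /
        (Real.exp (Real.log (N k) + c) + Real.exp (Real.log (N m) + c)))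
      = Real.log (N k / (N k + N m)) := by
    intro k m
    rw [Real.exp_add, Real.exp_add, Real.exp_log (hN k), Real.exp_log (hN m)]
    have hc : Real.exp c ≠ 0 := (Real.exp_pos c).ne'
    rw [← add_mul, mul_div_mul_right _ _ hc]
  simp only [hopt]
  rw [← sub_nonpos, ← Finset.sum_sub_distrib]
  simp only [← mul_sub, ← Finset.sum_sub_distrib, Finset.mul_sum]
  -- bound each term by B k m := (N k + N m) * (e^{g k} / (e^{g k} + e^{g m})) - N k
  set B : Fin K → Fin K → ℝ :=
    fun k m => (N k + N m) * (Real.exp (g k) / (Real.exp (g k) + Real.exp (g m))) - N k with hB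
  have key : ∀ k m : Fin K,
      N k * (Real.log (Real.exp (g k) / (Real.exp (g k) + Real.exp (g m)))
        - Real.log (N k / (N k + N m))) ≤ B k m := by
    intro k m
    set u := Real.exp (g k) with hu
    set v := Real.exp (g m) with hv
    have hden : 0 < u + v := add_pos (hapos k) (hapos m)
    have hNden : 0 < N k + N m := add_pos (hN k) (hN m)
    have hA : 0 < u / (u + v) := div_pos (hapos k) hden
    have hBp : 0 < N k / (N k + N m) := div_pos (hN k) hNden
    have hx : 0 < (u / (u + v)) / (N k / (N k + N m)) := div_pos hA hBp
    rw [← Real.log_div hA.ne' hBp.ne']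
    have h2 : Real.log ((u / (u + v)) / (N k / (N k + N m)))
        ≤ (u / (u + v)) / (N k / (N k + N m)) - 1 :=
      Real.log_le_sub_one_of_pos hx
    have h3 : N k * Real.log ((u / (u + v)) / (N k / (N k + N m)))
        ≤ N k * ((u / (u + v)) / (N k / (N k + N m)) - 1) :=
      mul_le_mul_of_nonneg_left h2 (hN k).le
    refine h3.trans_eq ?_
    rw [hB]
    field_simp [hden.ne', (hN k).ne', hNden.ne']
    ring
  calc ∑ k, ∑ m ∈ Finset.univ.erase k,
        N k * (Real.log (Real.exp (g k) / (Real.exp (g k) + Real.exp (g m)))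
          - Real.log (N k / (N k + N m)))
      ≤ ∑ k, ∑ m ∈ Finset.univ.erase k, B k m := by
        apply Finset.sum_le_sum; intro k _
        exact Finset.sum_le_sum fun m _ => key k m
    _ = 0 := by
        have hsym :
            ∑ k, ∑ m ∈ Finset.univ.erase k, B k m
            = ∑ k, ∑ m ∈ Finset.univ.erase k, B m k := by
          rw [Finset.sum_comm' (t' := Finset.univ) (s' := fun m => Finset.univ.erase m)]
          intro x y
          simp [Finset.mem_erase, eq_comm, and_comm]
        have hzero : ∀ k m : Fin K, B k m + B m k = 0 := by
          intro k m
          have hden : (0:ℝ) < Real.exp (g k) + Real.exp (g m) :=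
            add_pos (hapos k) (hapos m)
          rw [hB]
          field_simp [hden.ne']
          ring
        have h2 : (2:ℝ) * ∑ k, ∑ m ∈ Finset.univ.erase k, B k m
            = ∑ k, ∑ m ∈ Finset.univ.erase k, (B k m + B m k) := by
          rw [two_mul]
          nth_rewrite 2 [hsym]
          rw [← Finset.sum_add_distrib]
          congr 1; ext k
          rw [← Finset.sum_add_distrib]
        simp only [hzero, Finset.sum_const_zero] at h2
        linarith
end

section
/- Let N_k, N_m be positive reals. The pairwise log-likelihood g(f_k, f_m) = N_k · log(e^{f_k}/(e^{f_k}+e^{f_m})) + N_m · log(e^{f_m}/(e^{f_k}+e^{f_m})) is globally maximized over (f_k, f_m) ∈ ℝ² exactly when f_k - f_m = log(N_k/N_m); in particular f_k = log N_k + c, f_m = log N_m + c is a global maximizer for every c ∈ ℝ. -/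
/-!
Writing `p = e^a / (e^a + e^b)`, the likelihood is `N_k log p + N_m log (1 - p)`, and by Gibbs'
inequality (via `log x ≤ x - 1`, strict unless `x = 1`) this is maximal exactly at
`p = N_k / (N_k + N_m)`, i.e. at `e^(a - b) = N_k / N_m`.
-/

open Real

section TwoPointGibbs

variable {α β p q : ℝ}

theorem mul_log_add_mul_log_lt (hα : 0 < α) (hβ : 0 < β) (hp : 0 < p) (hq : 0 < q)
    (hpq : p + q = 1) (hne : p ≠ α / (α + β)) :
    α * log p + β * log q < α * log (α / (α + β)) + β * log (β / (α + β)) := by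
  have hs : 0 < α + β := add_pos hα hβ
  have hratio : p / (α / (α + β)) ≠ 1 := fun h => hne (div_eq_one_iff_eq (by positivity) |>.1 h)
  have hlt_p := log_lt_sub_one_of_pos (div_pos hp (div_pos hα hs)) hratio
  have hle_q := log_le_sub_one_of_pos (div_pos hq (div_pos hβ hs))
  rw [log_div hp.ne' (by positivity)] at hlt_p
  rw [log_div hq.ne' (by positivity)] at hle_q
  have hlin_p : α * (p / (α / (α + β)) - 1) = (α + β) * p - α := by field_simp
  have hlin_q : β * (q / (β / (α + β)) - 1) = (α + β) * q - β := by field_simp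
  -- the two linear bounds sum to `(α + β) (p + q) - (α + β) = 0`
  nlinarith [mul_lt_mul_of_pos_left hlt_p hα, mul_le_mul_of_nonneg_left hle_q hβ.le]

theorem mul_log_add_mul_log_eq_iff (hα : 0 < α) (hβ : 0 < β) (hp : 0 < p) (hq : 0 < q)
    (hpq : p + q = 1) :
    α * log p + β * log q = α * log (α / (α + β)) + β * log (β / (α + β)) ↔
      p = α / (α + β) := by
  refine ⟨fun h => ?_, fun h => ?_⟩
  · by_contra hne
    exact (mul_log_add_mul_log_lt hα hβ hp hq hpq hne).ne h
  · have hq' : q = β / (α + β) := by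
      rw [eq_sub_of_add_eq' hpq, h]
      field_simp [(add_pos hα hβ).ne']
      ring
    rw [h, hq']

theorem mul_log_add_mul_log_le (hα : 0 < α) (hβ : 0 < β) (hp : 0 < p) (hq : 0 < q)
    (hpq : p + q = 1) :
    α * log p + β * log q ≤ α * log (α / (α + β)) + β * log (β / (α + β)) := by
  rcases eq_or_ne p (α / (α + β)) with heq | hne
  · exact ((mul_log_add_mul_log_eq_iff hα hβ hp hq hpq).2 heq).le
  · exact (mul_log_add_mul_log_lt hα hβ hp hq hpq hne).le

end TwoPointGibbs

theorem exp_div_exp_add_exp_eq_iff {α β : ℝ} (hα : 0 < α) (hβ : 0 < β) (a b : ℝ) :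
    exp a / (exp a + exp b) = α / (α + β) ↔ a - b = log (α / β) := by
  have hcross : exp a / (exp a + exp b) = α / (α + β) ↔ exp (a - b) = α / β := by
    rw [exp_sub, div_eq_div_iff (by positivity) (by positivity),
      div_eq_div_iff (by positivity) hβ.ne']
    constructor <;> intro h <;> linarith
  rw [hcross]
  constructor
  · intro h; rw [← h, log_exp]
  · intro h; rw [h, exp_log (div_pos hα hβ)]

theorem exp_div_exp_add_exp_add (a b : ℝ) :
    exp a / (exp a + exp b) + exp b / (exp a + exp b) = 1 := by
  rw [← add_div, div_self (by positivity)]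

/-- The pairwise log-likelihood
`g (a, b) = N_k log (e^a / (e^a + e^b)) + N_m log (e^b / (e^a + e^b))`
is globally maximized exactly when `a - b = log (N_k / N_m)`; in particular
`a = log N_k + c`, `b = log N_m + c` is a global maximizer for every `c`. -/
theorem pairwise_likelihood_optimal (Nk Nm : ℝ) (hNk : 0 < Nk) (hNm : 0 < Nm)
    (g : ℝ → ℝ → ℝ)
    (hg : ∀ a b, g a b = Nk * Real.log (Real.exp a / (Real.exp a + Real.exp b)) +
      Nm * Real.log (Real.exp b / (Real.exp a + Real.exp b))) :
    (∀ a b : ℝ, (∀ x y : ℝ, g x y ≤ g a b) ↔ a - b = Real.log (Nk / Nm)) ∧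
    (∀ c : ℝ, ∀ x y : ℝ, g x y ≤ g (Real.log Nk + c) (Real.log Nm + c)) := by
  have hmax (x y : ℝ) :
      g x y ≤ Nk * log (Nk / (Nk + Nm)) + Nm * log (Nm / (Nk + Nm)) :=
    hg x y ▸ mul_log_add_mul_log_le hNk hNm (by positivity) (by positivity)
      (exp_div_exp_add_exp_add x y)
  have hattained (a b : ℝ) :
      g a b = Nk * log (Nk / (Nk + Nm)) + Nm * log (Nm / (Nk + Nm)) ↔
        a - b = log (Nk / Nm) := by
    rw [hg, mul_log_add_mul_log_eq_iff hNk hNm (by positivity) (by positivity)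
      (exp_div_exp_add_exp_add a b), exp_div_exp_add_exp_eq_iff hNk hNm]
  have hshift (c : ℝ) : (log Nk + c) - (log Nm + c) = log (Nk / Nm) := by
    rw [log_div hNk.ne' hNm.ne']; ring
  refine ⟨fun a b => ⟨fun h => ?_, fun h x y => ?_⟩, fun c x y => ?_⟩
  · have hopt := (hattained _ _).2 (hshift 0)
    exact (hattained a b).1 (le_antisymm (hmax a b) (hopt ▸ h _ _))
  · exact (hattained a b).2 h ▸ hmax x y
  · exact (hattained _ _).2 (hshift c) ▸ hmax x y
end

section
/- For any real numbers f_1, …, f_K, any k ∈ {1, …, K}, and any α ∈ ℝ, the softmax probability satisfies e^{f_k}/∑_{m=1}^K e^{f_m} ≥ e^{f_k - α} / ∏_{m=1}^K (1 + e^{f_m - α}). -/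
lemma sum_le_prod_one_add {ι : Type*} (s : Finset ι) (x : ι → ℝ) (hx : ∀ i, 0 ≤ x i) :
    ∑ i ∈ s, x i ≤ ∏ i ∈ s, (1 + x i) := by
  induction s using Finset.cons_induction with
  | empty => simp
  | cons a s ha ih =>
    rw [Finset.sum_cons, Finset.prod_cons]
    have hp : (1:ℝ) ≤ ∏ i ∈ s, (1 + x i) := by
      calc (1:ℝ) = ∏ i ∈ s, 1 := by simp
        _ ≤ ∏ i ∈ s, (1 + x i) :=
          Finset.prod_le_prod (fun i _ => zero_le_one) (fun i _ => by linarith [hx i])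
    nlinarith [hx a]

/-- Bouchard's lower bound on the softmax probability:
`e^{f k} / ∑ m, e^{f m} ≥ e^{f k - α} / ∏ m, (1 + e^{f m - α})`. -/
theorem bouchard_softmax_bound {K : ℕ} (f : Fin K → ℝ) (k : Fin K) (α : ℝ) :
    Real.exp (f k) / (∑ m, Real.exp (f m)) ≥
      Real.exp (f k - α) / ∏ m, (1 + Real.exp (f m - α)) := by
  have hs : (0:ℝ) < ∑ m, Real.exp (f m) :=
    Finset.sum_pos (fun m _ => Real.exp_pos _) ⟨k, Finset.mem_univ k⟩
  have hp : (0:ℝ) < ∏ m, (1 + Real.exp (f m - α)) :=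
    Finset.prod_pos fun m _ => by positivity
  rw [ge_iff_le, div_le_div_iff₀ hp hs]
  have key : ∑ m, Real.exp (f m - α) ≤ ∏ m, (1 + Real.exp (f m - α)) :=
    sum_le_prod_one_add _ _ fun m => (Real.exp_pos _).le
  calc Real.exp (f k - α) * ∑ m, Real.exp (f m)
      = Real.exp (f k) * ∑ m, Real.exp (f m - α) := by
        rw [Finset.mul_sum, Finset.mul_sum]
        congr 1; ext m; rw [← Real.exp_add, ← Real.exp_add]; ring_nf
    _ ≤ Real.exp (f k) * ∏ m, (1 + Real.exp (f m - α)) := by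
        exact mul_le_mul_of_nonneg_left key (Real.exp_pos _).le
end

section
/- Let N_1, N_2 be positive reals and define 𝓕(f_1, f_2, α) = N_1(f_1 - α) + N_2(f_2 - α) - (N_1 + N_2)[log(1 + e^{f_1 - α}) + log(1 + e^{f_2 - α})] on ℝ³. Then 𝓕 is globally maximized at points satisfying α = (f_1 + f_2)/2 and f_k = 2 log N_k + c for k = 1, 2, where c ∈ ℝ is an arbitrary constant; in particular every such point is a global maximizer of 𝓕. -/
private lemma bouchard_key (a b x : ℝ) (ha : 0 < a) (hb : 0 < b) :
    a * x - (a + b) * Real.log (1 + Real.exp x) ≤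
      a * Real.log (a / b) - (a + b) * Real.log (1 + a / b) := by
  set t := Real.exp x with ht
  have htpos : 0 < t := Real.exp_pos x
  have h1t : 0 < 1 + t := by linarith
  have hab : 0 < a + b := by linarith
  have hu1 : 0 < t * (a + b) / (a * (1 + t)) := by positivity
  have hu2 : 0 < (a + b) / (b * (1 + t)) := by positivity
  have h1 := Real.log_le_sub_one_of_pos hu1
  have h2 := Real.log_le_sub_one_of_pos hu2
  have e1 : Real.log (t * (a + b) / (a * (1 + t)))
      = x + Real.log (a + b) - (Real.log a + Real.log (1 + t)) := by
    rw [Real.log_div (by positivity) (by positivity), Real.log_mul (ne_of_gt htpos) (ne_of_gt hab),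
      Real.log_mul (ne_of_gt ha) (ne_of_gt h1t), ht, Real.log_exp]
  have e2 : Real.log ((a + b) / (b * (1 + t)))
      = Real.log (a + b) - (Real.log b + Real.log (1 + t)) := by
    rw [Real.log_div (ne_of_gt hab) (by positivity),
      Real.log_mul (ne_of_gt hb) (ne_of_gt h1t)]
  have s1 : a * (t * (a + b) / (a * (1 + t))) = t * (a + b) / (1 + t) := by
    field_simp
  have s2 : b * ((a + b) / (b * (1 + t))) = (a + b) / (1 + t) := by
    field_simp
  have hsum : a * Real.log (t * (a + b) / (a * (1 + t)))
      + b * Real.log ((a + b) / (b * (1 + t))) ≤ 0 := by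
    have := add_le_add (mul_le_mul_of_nonneg_left h1 ha.le)
      (mul_le_mul_of_nonneg_left h2 hb.le)
    have hz : a * (t * (a + b) / (a * (1 + t)) - 1) + b * ((a + b) / (b * (1 + t)) - 1) = 0 := by
      field_simp; ring
    linarith
  rw [e1, e2] at hsum
  have eab : Real.log (a / b) = Real.log a - Real.log b :=
    Real.log_div (ne_of_gt ha) (ne_of_gt hb)
  have eab2 : Real.log (1 + a / b) = Real.log (a + b) - Real.log b := by
    rw [show (1 : ℝ) + a / b = (a + b) / b by field_simp; ring,
      Real.log_div (ne_of_gt hab) (ne_of_gt hb)]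
  rw [eab, eab2]
  nlinarith [hsum]

/-- For `K = 2`, the Bouchard-bound surrogate log-likelihood
`𝓕 (f₁, f₂, α) = N₁ (f₁ - α) + N₂ (f₂ - α)
  - (N₁ + N₂) (log (1 + e^{f₁ - α}) + log (1 + e^{f₂ - α}))`
is globally maximized at points with `α = (f₁ + f₂)/2` and `f_k = 2 log N_k + c`;
in particular every such point is a global maximizer. -/
theorem bouchard_two_class_optimal (N1 N2 : ℝ) (hN1 : 0 < N1) (hN2 : 0 < N2)
    (F : ℝ → ℝ → ℝ → ℝ)
    (hF : ∀ f1 f2 α, F f1 f2 α = N1 * (f1 - α) + N2 * (f2 - α) -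
      (N1 + N2) * (Real.log (1 + Real.exp (f1 - α)) + Real.log (1 + Real.exp (f2 - α)))) :
    ∀ c : ℝ, ∀ g1 g2 β : ℝ,
      F g1 g2 β ≤ F (2 * Real.log N1 + c) (2 * Real.log N2 + c)
        (((2 * Real.log N1 + c) + (2 * Real.log N2 + c)) / 2) := by
  intro c g1 g2 β
  rw [hF, hF]
  have d1 : (2 * Real.log N1 + c) - (((2 * Real.log N1 + c) + (2 * Real.log N2 + c)) / 2)
      = Real.log (N1 / N2) := by
    rw [Real.log_div (ne_of_gt hN1) (ne_of_gt hN2)]; ring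
  have d2 : (2 * Real.log N2 + c) - (((2 * Real.log N1 + c) + (2 * Real.log N2 + c)) / 2)
      = Real.log (N2 / N1) := by
    rw [Real.log_div (ne_of_gt hN2) (ne_of_gt hN1)]; ring
  rw [d1, d2, Real.exp_log (by positivity), Real.exp_log (by positivity)]
  have k1 := bouchard_key N1 N2 (g1 - β) hN1 hN2
  have k2 := bouchard_key N2 N1 (g2 - β) hN2 hN1
  nlinarith [k1, k2]
end

section
/- For fixed real numbers f_1 and f_2, the function h(α) = α + log(1 + e^{f_1 - α}) + log(1 + e^{f_2 - α}) is convex on ℝ and is globally minimized at α = (f_1 + f_2)/2. -/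
/-!
Softplus `x ↦ log (1 + eˣ)` has derivative the sigmoid, which is increasing, so it is convex;
hence so is `h`. The identity `log (1 + eˣ) = x + log (1 + e⁻ˣ)` shows that `h` is invariant
under the reflection `α ↦ f₁ + f₂ - α`, and a convex function invariant under a reflection
is minimal at the fixed point of the reflection.
-/

open Real Set

lemma hasDerivAt_log_one_add_exp (x : ℝ) :
    HasDerivAt (fun x => log (1 + exp x)) (sigmoid x) x := by
  have hpos : 0 < 1 + exp x := by positivity
  convert ((hasDerivAt_exp x).const_add 1).log hpos.ne' using 1
  rw [sigmoid_def, exp_neg]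
  field_simp
  ring

lemma convexOn_log_one_add_exp : ConvexOn ℝ univ fun x => log (1 + exp x) := by
  refine Monotone.convexOn_univ_of_deriv
    (fun x => (hasDerivAt_log_one_add_exp x).differentiableAt) ?_
  rw [show deriv (fun x => log (1 + exp x)) = sigmoid from
    funext fun x => (hasDerivAt_log_one_add_exp x).deriv]
  exact sigmoid_monotone

lemma log_one_add_exp_eq_add_log_one_add_exp_neg (x : ℝ) :
    log (1 + exp x) = x + log (1 + exp (-x)) := by
  have : 1 + exp x = exp x * (1 + exp (-x)) := by
    rw [mul_add, mul_one, ← exp_add, add_neg_cancel, exp_zero, add_comm]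
  rw [this, log_mul (exp_pos x).ne' (by positivity), log_exp]

lemma convexOn_log_one_add_exp_sub (c : ℝ) :
    ConvexOn ℝ univ fun x => log (1 + exp (c - x)) :=
  convexOn_log_one_add_exp.comp_affineMap (AffineMap.const ℝ ℝ c - AffineMap.id ℝ ℝ)

theorem ConvexOn.map_half_smul_le {𝕜 E β : Type*}
    [Field 𝕜] [LinearOrder 𝕜] [IsStrictOrderedRing 𝕜] [AddCommGroup E] [Module 𝕜 E]
    [AddCommGroup β] [PartialOrder β] [Module 𝕜 β]
    {s : Set E} {f : E → β} (hf : ConvexOn 𝕜 s f) {a x : E} (hx : x ∈ s) (hax : a - x ∈ s)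
    (hsymm : f (a - x) = f x) : f ((2⁻¹ : 𝕜) • a) ≤ f x := by
  have half : (0 : 𝕜) ≤ 2⁻¹ := by positivity
  calc f ((2⁻¹ : 𝕜) • a) = f ((2⁻¹ : 𝕜) • x + (2⁻¹ : 𝕜) • (a - x)) := by
        rw [← smul_add, add_sub_cancel]
    _ ≤ (2⁻¹ : 𝕜) • f x + (2⁻¹ : 𝕜) • f (a - x) := hf.2 hx hax half half (by norm_num)
    _ = f x := by rw [hsymm, ← add_smul, ← one_div, add_halves, one_smul]

noncomputable def bouchardBound (f1 f2 α : ℝ) : ℝ :=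
  α + log (1 + exp (f1 - α)) + log (1 + exp (f2 - α))

lemma convexOn_bouchardBound (f1 f2 : ℝ) : ConvexOn ℝ univ (bouchardBound f1 f2) :=
  ((convexOn_id convex_univ).add (convexOn_log_one_add_exp_sub f1)).add
    (convexOn_log_one_add_exp_sub f2)

lemma bouchardBound_reflect (f1 f2 α : ℝ) :
    bouchardBound f1 f2 (f1 + f2 - α) = bouchardBound f1 f2 α := by
  have h1 : f1 - (f1 + f2 - α) = -(f2 - α) := by ring
  have h2 : f2 - (f1 + f2 - α) = -(f1 - α) := by ring
  rw [bouchardBound, bouchardBound, h1, h2,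
    log_one_add_exp_eq_add_log_one_add_exp_neg (f1 - α),
    log_one_add_exp_eq_add_log_one_add_exp_neg (f2 - α)]
  ring

/-- For fixed `f₁, f₂`, Bouchard's upper bound on `log (e^{f₁} + e^{f₂})`,
`h α = α + log (1 + e^{f₁ - α}) + log (1 + e^{f₂ - α})`,
is convex in `α` and globally minimized at `α = (f₁ + f₂)/2`. -/
theorem bouchard_alpha_optimal (f1 f2 : ℝ) :
    ConvexOn ℝ Set.univ (fun α : ℝ =>
      α + Real.log (1 + Real.exp (f1 - α)) + Real.log (1 + Real.exp (f2 - α))) ∧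
    ∀ β : ℝ,
      ((f1 + f2) / 2) + Real.log (1 + Real.exp (f1 - (f1 + f2) / 2)) +
          Real.log (1 + Real.exp (f2 - (f1 + f2) / 2)) ≤
        β + Real.log (1 + Real.exp (f1 - β)) + Real.log (1 + Real.exp (f2 - β)) := by
  refine ⟨convexOn_bouchardBound f1 f2, fun β => ?_⟩
  have hmin := (convexOn_bouchardBound f1 f2).map_half_smul_le (mem_univ β) (mem_univ _)
    (bouchardBound_reflect f1 f2 β)
  rwa [smul_eq_mul, ← div_eq_inv_mul] at hmin
end
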